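/- Let α_1, …, α_n : Finset Q be tolerable finsets whose syndromes are separated, i.e. H_{α_1 Δ ⋯ Δ α_n} equals the subgroup of (Finset Q, Δ) generated by H_{α_1} ∪ ⋯ ∪ H_{α_n}. Then α := α_1 Δ ⋯ Δ α_n is tolerable. (Lemma 3(i).) -/

import Mathlib

open Finset
open scoped symmDiff Matrix

namespace CC

variable {Q : Type*} [Fintype Q] [DecidableEq Q]

/-- A subgroup of the abelian group `(Finset Q, ∆)`. -/
def IsSubgroup (S : Set (Finset Q)) : Prop :=
  ∅ ∈ S ∧ ∀ a ∈ S, ∀ b ∈ S, a ∆ b ∈ S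

/-- The subgroup of `(Finset Q, ∆)` generated by a set. -/
def closure (T : Set (Finset Q)) : Set (Finset Q) :=
  ⋂₀ {S : Set (Finset Q) | IsSubgroup S ∧ T ⊆ S}

/-- A CSS stabilizer code on the qubits `Q`. -/
structure CSS (Q : Type*) [Fintype Q] [DecidableEq Q] where
  SX : Set (Finset Q)
  SZ : Set (Finset Q)
  hSX : IsSubgroup SX
  hSZ : IsSubgroup SZ
  comm : ∀ a ∈ SZ, ∀ b ∈ SX, 2 ∣ (a ∩ b).card

def ZX (C : CSS Q) : Set (Finset Q) := {γ | ∀ f ∈ C.SZ, 2 ∣ (γ ∩ f).card}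

def ZZ (C : CSS Q) : Set (Finset Q) := {z | ∀ c ∈ C.SX, 2 ∣ (z ∩ c).card}

/-- Duality assumption. -/
def Dual (C : CSS Q) : Prop :=
  C.SZ = {z | ∀ γ ∈ ZX C, 2 ∣ (z ∩ γ).card} ∧
  C.SX = {c | ∀ z ∈ ZZ C, 2 ∣ (c ∩ z).card}

def LogicalX (C : CSS Q) (l : Finset Q) : Prop := l ∈ ZX C ∧ l ∉ C.SX

def LogicalZ (C : CSS Q) (l : Finset Q) : Prop := l ∈ ZZ C ∧ l ∉ C.SZ

/-- Single-logical-qubit assumption. -/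
def SingleQubit (C : CSS Q) : Prop :=
  (ZX C ≠ C.SX ∧ ∀ l l', LogicalX C l → LogicalX C l' → l ∆ l' ∈ C.SX) ∧
  (ZZ C ≠ C.SZ ∧ ∀ l l', LogicalZ C l → LogicalZ C l' → l ∆ l' ∈ C.SZ)

/-- Intersection axiom. -/
def Inter (C : CSS Q) : Prop :=
  ZZ C = {x | ∃ α ∈ ZX C, ∃ β ∈ ZX C, x = α ∩ β}

def G (C : CSS Q) (α : Finset Q) : Set (Finset Q) :=
  closure (C.SZ ∪ {x | ∃ β ∈ ZX C, x = α ∩ β})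

def H (C : CSS Q) (α : Finset Q) : Set (Finset Q) :=
  closure (C.SZ ∪ {x | ∃ β ∈ C.SX, x = α ∩ β})

def Zof (K : Set (Finset Q)) : Set (Finset Q) := {γ | ∀ h ∈ K, 2 ∣ (γ ∩ h).card}

def Tolerable (C : CSS Q) (α : Finset Q) : Prop := ∀ z ∈ G C α, ¬ LogicalZ C z

def g (b : Q → ℤ) (s : Finset Q) : ℤ := ∑ q ∈ s, b q

/-- T-invariance assumption. -/
def TInv (C : CSS Q) (b : Q → ℤ) : Prop :=
  (∀ β ∈ C.SX, (8 : ℤ) ∣ g b β) ∧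
  (∀ β ∈ C.SX, ∀ γ ∈ ZX C, (8 : ℤ) ∣ (g b β - 2 * g b (γ ∩ β)))

def E (C : CSS Q) (b : Q → ℤ) (α : Finset Q) : Set (Finset Q) :=
  {z | ∀ γ ∈ Zof (G C α), g b (γ ∩ α) ≡ 2 * ((z ∩ γ).card : ℤ) [ZMOD 4]}

/- Quantum setting -/

abbrev M (Q : Type*) [Fintype Q] [DecidableEq Q] :=
  Matrix (Q → ZMod 2) (Q → ZMod 2) ℂ

def supp (v : Q → ZMod 2) : Finset Q := Finset.univ.filter (fun q => v q = 1)

def ind (α : Finset Q) : Q → ZMod 2 := fun q => if q ∈ α then 1 else 0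

def XM (α : Finset Q) : M Q :=
  Matrix.of fun u v => if u = v + ind α then (1 : ℂ) else 0

noncomputable def ZM (α : Finset Q) : M Q :=
  Matrix.diagonal fun v => (-1 : ℂ) ^ (supp v ∩ α).card

noncomputable def AM (b : Q → ℤ) (α : Finset Q) : M Q :=
  Matrix.diagonal fun v => Complex.I ^ (g b (α ∩ supp v))

noncomputable def UM (b : Q → ℤ) : M Q :=
  Matrix.diagonal fun v => Complex.exp (Real.pi * Complex.I / 4) ^ (g b (supp v))

def Encoded (C : CSS Q) (ρ : M Q) : Prop :=
  ρ.trace = 1 ∧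
  (∀ c ∈ C.SX, XM c * ρ = ρ ∧ ρ * XM c = ρ) ∧
  (∀ f ∈ C.SZ, ZM f * ρ = ρ ∧ ρ * ZM f = ρ)

instance : Std.Commutative (α := Finset Q) (· ∆ ·) := ⟨symmDiff_comm⟩
instance : Std.Associative (α := Finset Q) (· ∆ ·) := ⟨symmDiff_assoc⟩

/-- Iterated symmetric difference over a finite index set. -/
def bigΔ {ι : Type*} (s : Finset ι) (f : ι → Finset Q) : Finset Q :=
  s.fold (· ∆ ·) ∅ f

/-!
Write a logical error `z ∈ G_α` as `s ∆ (α ∩ β)` with `s ∈ S_Z` and `β ∈ Z_X(S)`. Then `α ∩ β`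
commutes with `S_X`, which says exactly that `β` has even overlap with every element of `H_α`.
Separation puts each `H_{α_i}` inside `H_α`, so the same holds for every `α_i ∩ β ∈ G_{α_i}`;
tolerability of `α_i` forces `α_i ∩ β ∈ S_Z`, hence `α ∩ β = Δᵢ (α_i ∩ β) ∈ S_Z` and `z ∈ S_Z`.
-/

section

omit [Fintype Q]

theorem two_dvd_card_symmDiff {a b : Finset Q} (ha : 2 ∣ a.card) (hb : 2 ∣ b.card) :
    2 ∣ (a ∆ b).card := by
  have hdisj : (a ∆ b).card + (a ∩ b).card = (a ∪ b).card :=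
    (card_union_of_disjoint (disjoint_symmDiff_inf a b)).symm.trans
      (congrArg card (symmDiff_sup_inf a b))
  have := card_union_add_card_inter a b
  omega

theorem two_dvd_card_symmDiff_inter {a b c : Finset Q} (ha : 2 ∣ (a ∩ c).card)
    (hb : 2 ∣ (b ∩ c).card) : 2 ∣ ((a ∆ b) ∩ c).card := by
  rw [show (a ∆ b) ∩ c = (a ∩ c) ∆ (b ∩ c) from inf_symmDiff_distrib_right a b c]
  exact two_dvd_card_symmDiff ha hb

theorem closure_subset {T S : Set (Finset Q)} (hS : IsSubgroup S) (hTS : T ⊆ S) :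
    closure T ⊆ S :=
  fun _ hx => hx S ⟨hS, hTS⟩

theorem subset_closure {T : Set (Finset Q)} : T ⊆ closure T :=
  fun _ hx _ hS => hS.2 hx

theorem isSubgroup_Zof (K : Set (Finset Q)) : IsSubgroup (Zof K) :=
  ⟨fun _ _ => by simp, fun _ ha _ hb h hh => two_dvd_card_symmDiff_inter (ha h hh) (hb h hh)⟩

theorem Zof_anti {K K' : Set (Finset Q)} (h : K ⊆ K') : Zof K' ⊆ Zof K :=
  fun _ hγ k hk => hγ k (h hk)

theorem Zof_closure (T : Set (Finset Q)) : Zof (closure T) = Zof T := by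
  refine (Zof_anti subset_closure).antisymm fun γ hγ => ?_
  have hsub : IsSubgroup {h : Finset Q | 2 ∣ (γ ∩ h).card} := by
    refine ⟨by simp, fun a ha b hb => ?_⟩
    simp only [Set.mem_ofPred_eq, inter_comm γ] at ha hb ⊢
    exact two_dvd_card_symmDiff_inter ha hb
  exact closure_subset hsub hγ

end

section bigΔ

variable {ι : Type*}

theorem bigΔ_cons (a : ι) (s : Finset ι) (ha : a ∉ s) (f : ι → Finset Q) :
    bigΔ (s.cons a ha) f = f a ∆ bigΔ s f :=
  fold_cons ha

theorem bigΔ_inter (s : Finset ι) (f : ι → Finset Q) (t : Finset Q) :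
    bigΔ s f ∩ t = bigΔ s (fun i => f i ∩ t) := by
  induction s using Finset.cons_induction with
  | empty => simp [bigΔ]
  | cons a s ha ih =>
    rw [bigΔ_cons, bigΔ_cons, ← ih]
    exact inf_symmDiff_distrib_right _ _ _

theorem IsSubgroup.bigΔ_mem {S : Set (Finset Q)} (hS : IsSubgroup S) (s : Finset ι)
    {f : ι → Finset Q} (hf : ∀ i ∈ s, f i ∈ S) : bigΔ s f ∈ S := by
  induction s using Finset.cons_induction with
  | empty => exact hS.1
  | cons a s ha ih =>
    rw [bigΔ_cons]
    exact hS.2 _ (hf a (mem_cons_self a s)) _ (ih fun i hi => hf i (mem_cons_of_mem hi))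

end bigΔ

namespace CSS

variable (C : CSS Q)

theorem isSubgroup_ZX : IsSubgroup (ZX C) :=
  isSubgroup_Zof C.SZ

theorem isSubgroup_ZZ : IsSubgroup (ZZ C) :=
  isSubgroup_Zof C.SX

theorem SZ_subset_ZZ : C.SZ ⊆ ZZ C :=
  fun _ hs c hc => C.comm _ hs c hc

theorem exists_eq_symmDiff_inter_of_mem_G {α z : Finset Q} (hz : z ∈ G C α) :
    ∃ s ∈ C.SZ, ∃ β ∈ ZX C, z = s ∆ (α ∩ β) := by
  have hsub : IsSubgroup {x | ∃ s ∈ C.SZ, ∃ β ∈ ZX C, x = s ∆ (α ∩ β)} := by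
    refine ⟨⟨∅, C.hSZ.1, ∅, C.isSubgroup_ZX.1, by simp⟩, ?_⟩
    rintro _ ⟨s, hs, β, hβ, rfl⟩ _ ⟨s', hs', β', hβ', rfl⟩
    refine ⟨s ∆ s', C.hSZ.2 s hs s' hs', β ∆ β', C.isSubgroup_ZX.2 β hβ β' hβ', ?_⟩
    rw [show α ∩ (β ∆ β') = (α ∩ β) ∆ (α ∩ β') from inf_symmDiff_distrib_left α β β']
    ac_rfl
  refine closure_subset hsub ?_ hz
  rintro x (hx | ⟨β, hβ, rfl⟩)
  · exact ⟨x, hx, ∅, C.isSubgroup_ZX.1, by rw [inter_empty]; exact (symmDiff_bot x).symm⟩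
  · exact ⟨∅, C.hSZ.1, β, hβ, (bot_symmDiff _).symm⟩

theorem inter_mem_ZZ_iff_mem_Zof_H {α β : Finset Q} (hβ : β ∈ ZX C) :
    α ∩ β ∈ ZZ C ↔ β ∈ Zof (H C α) := by
  have hassoc : ∀ c, (α ∩ β) ∩ c = β ∩ (α ∩ c) := fun c => by
    rw [inter_comm α β, inter_assoc]
  rw [H, Zof_closure]
  constructor
  · rintro h x (hx | ⟨c, hc, rfl⟩)
    · exact hβ x hx
    · rw [← hassoc]
      exact h c hc
  · intro h c hc
    rw [hassoc]
    exact h _ (Or.inr ⟨c, hc, rfl⟩)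

theorem inter_mem_SZ_of_tolerable {α β : Finset Q} (hα : Tolerable C α) (hβ : β ∈ ZX C)
    (hαβ : α ∩ β ∈ ZZ C) : α ∩ β ∈ C.SZ := by
  by_contra hnot
  exact hα _ (subset_closure (Or.inr ⟨β, hβ, rfl⟩)) ⟨hαβ, hnot⟩

end CSS

theorem tolerable_of_separated_general
    (C : CSS Q)
    (n : ℕ) (αs : Fin n → Finset Q) (htol : ∀ i, Tolerable C (αs i))
    (hsep : H C (bigΔ Finset.univ αs) = closure (⋃ i, H C (αs i))) :
    Tolerable C (bigΔ Finset.univ αs) := by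
  rintro z hz ⟨hzZZ, hznSZ⟩
  obtain ⟨s, hs, β, hβ, rfl⟩ := C.exists_eq_symmDiff_inter_of_mem_G hz
  have hαβ : bigΔ univ αs ∩ β ∈ ZZ C := by
    simpa only [symmDiff_symmDiff_cancel_left] using
      C.isSubgroup_ZZ.2 _ (C.SZ_subset_ZZ hs) _ hzZZ
  have hβH : β ∈ Zof (H C (bigΔ univ αs)) := (C.inter_mem_ZZ_iff_mem_Zof_H hβ).1 hαβ
  have hH : ∀ i, H C (αs i) ⊆ H C (bigΔ univ αs) := fun i => by
    rw [hsep]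
    exact (Set.subset_iUnion (fun i => H C (αs i)) i).trans subset_closure
  have hi : ∀ i ∈ univ, αs i ∩ β ∈ C.SZ := fun i _ =>
    C.inter_mem_SZ_of_tolerable (htol i) hβ
      ((C.inter_mem_ZZ_iff_mem_Zof_H hβ).2 (Zof_anti (hH i) hβH))
  have hαβSZ : bigΔ univ αs ∩ β ∈ C.SZ := by
    rw [bigΔ_inter]
    exact C.hSZ.bigΔ_mem univ hi
  exact hznSZ (C.hSZ.2 s hs _ hαβSZ)

/-- Lemma 3(i): a product of tolerable errors with separated syndromes is tolerable. -/
theorem tolerable_of_separated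
    (C : CSS Q) (hdual : Dual C) (hsingle : SingleQubit C) (hinter : Inter C)
    (n : ℕ) (αs : Fin n → Finset Q) (htol : ∀ i, Tolerable C (αs i))
    (hsep : H C (bigΔ Finset.univ αs) = closure (⋃ i, H C (αs i))) :
    Tolerable C (bigΔ Finset.univ αs) :=
  tolerable_of_separated_general C n αs htol hsep

end CC
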